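/- Simplex lemma in the function-field setting: let t > 0, M_k > (2n-1)M, x_0 ∈ Z_O^n, and define S = {v ∈ F_q[X]^{n+1} : ||g_t u_{x_0} v|| < e^{-M_k + (2n-1)M}}. Then S is contained in a K-linear hyperplane of K^{n+1}. -/

import Mathlib

/-!
Both `g_t` and `u_{x₀}` have determinant `1`. If the integer vectors `p` with
`‖g_t u_{x₀} p‖ < e^{-M_k+(2n-1)M} < 1` spanned `K^{n+1}`, `n+1` independent ones would form a
nonsingular polynomial matrix `P`, and `|det (g_t u_{x₀} P)| = |det P| ≥ 1`. But every entry of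
`g_t u_{x₀} P` has absolute value `< 1`, so by the ultrametric inequality applied to the Leibniz
expansion its determinant has absolute value `< 1`. Hence they lie in the kernel of a nonzero
linear form.
-/

open scoped Classical ENNReal
noncomputable section

/-- The absolute value on `K = 𝔽_q((X⁻¹))`, modelled as Laurent series in `T = X⁻¹`:
`|x| = e^{-(order of x)}`, so that `|X| = e`. -/
def kabs {Fq : Type} [Field Fq] (x : LaurentSeries Fq) : ℝ :=
  if x = 0 then 0 else Real.exp (-(x.order : ℝ))

lemma kabs_nonneg {Fq : Type} [Field Fq] (x : LaurentSeries Fq) : 0 ≤ kabs x := by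
  unfold kabs; split <;> positivity

lemma kabs_eq_zero {Fq : Type} [Field Fq] {x : LaurentSeries Fq} :
    kabs x = 0 ↔ x = 0 := by
  unfold kabs; split
  · simp_all
  · simp_all [Real.exp_ne_zero]

lemma kabs_neg {Fq : Type} [Field Fq] (x : LaurentSeries Fq) : kabs (-x) = kabs x := by
  unfold kabs
  simp [HahnSeries.order_neg, neg_eq_zero]

lemma kabs_add_le {Fq : Type} [Field Fq] (x y : LaurentSeries Fq) :
    kabs (x + y) ≤ max (kabs x) (kabs y) := by
  by_cases hx : x = 0
  · simp [hx, le_max_iff, le_refl]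
  by_cases hy : y = 0
  · simp [hy, le_max_iff, le_refl]
  by_cases hxy : x + y = 0
  · simp only [hxy, kabs, if_pos rfl, le_max_iff]
    left; exact kabs_nonneg x |>.trans (by simp [kabs, hx, le_refl])
  · have h := HahnSeries.min_order_le_order_add hxy
    simp only [kabs, if_neg hx, if_neg hy, if_neg hxy, le_max_iff]
    rcases le_total x.order y.order with h' | h'
    · left
      apply Real.exp_le_exp.2
      have : x.order ≤ (x + y).order := le_trans (by simp [min_eq_left h']) h
      have h2 : (x.order : ℝ) ≤ ((x + y).order : ℝ) := by exact_mod_cast this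
      linarith
    · right
      apply Real.exp_le_exp.2
      have : y.order ≤ (x + y).order := le_trans (by simp [min_eq_right h']) h
      have h2 : (y.order : ℝ) ≤ ((x + y).order : ℝ) := by exact_mod_cast this
      linarith

instance (priority := 10000) kMetric (Fq : Type) [Field Fq] :
    MetricSpace (LaurentSeries Fq) where
  dist x y := kabs (x - y)
  dist_self x := by simp [kabs]
  dist_comm x y := by
    show kabs (x - y) = kabs (y - x)
    have h : x - y = -(y - x) := by ring
    rw [h, kabs_neg]
  dist_triangle x y z := by
    have h := kabs_add_le (x - y) (y - z)
    rw [sub_add_sub_cancel] at h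
    exact h.trans (max_le (le_add_of_nonneg_right (kabs_nonneg _))
      (le_add_of_nonneg_left (kabs_nonneg _)))
  eq_of_dist_eq_zero h := sub_eq_zero.mp (kabs_eq_zero.mp h)

/-- The embedding of `𝔽_q[X]` into `K`, sending `X` to `T⁻¹`. -/
def polyK (Fq : Type) [Field Fq] : Polynomial Fq →+* LaurentSeries Fq :=
  (Polynomial.aeval (HahnSeries.single (-1 : ℤ) (1 : Fq))).toRingHom

/-- The element `X` of `K`. -/
def Xe (Fq : Type) [Field Fq] : LaurentSeries Fq := HahnSeries.single (-1 : ℤ) 1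

/-- Sup norm on `K^m`. -/
def supNorm {Fq : Type} [Field Fq] {m : ℕ} (v : Fin m → LaurentSeries Fq) : ℝ :=
  ⨆ i, kabs (v i)

/-- The diagonal flow `g_t = diag(X^{-nt}, X^t, …, X^t)`. -/
def gMat (Fq : Type) [Field Fq] (n : ℕ) (t : ℤ) :
    Matrix (Fin (n+1)) (Fin (n+1)) (LaurentSeries Fq) :=
  Matrix.diagonal (fun i => if i = 0 then Xe Fq ^ (-(n : ℤ) * t) else Xe Fq ^ t)

/-- The unipotent matrix `u_x` with first column `(1, -x_1, …, -x_n)ᵀ`. -/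
def uMat {Fq : Type} [Field Fq] {n : ℕ} (x : Fin n → LaurentSeries Fq) :
    Matrix (Fin (n+1)) (Fin (n+1)) (LaurentSeries Fq) :=
  Matrix.of fun i j =>
    if i = j then 1 else if hi : i = 0 then 0 else if j = 0 then -x (i.pred hi) else 0

/-- The integer vector `(g, f_1, …, f_n)` associated to a rational point. -/
def assocVec {Fq : Type} [Field Fq] {n : ℕ} (f : Fin n → Polynomial Fq)
    (g : Polynomial Fq) : Fin (n+1) → LaurentSeries Fq :=
  Fin.cons (polyK Fq g) fun i => polyK Fq (f i)

/-- The height `H(v) = max(|g|, |f_1|, …, |f_n|)`. -/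
def height {Fq : Type} [Field Fq] {n : ℕ} (f : Fin n → Polynomial Fq)
    (g : Polynomial Fq) : ℝ :=
  supNorm (assocVec f g)

/-- The rational point `(f_1/g, …, f_n/g) ∈ K^n`. -/
def ratPt {Fq : Type} [Field Fq] {n : ℕ} (f : Fin n → Polynomial Fq)
    (g : Polynomial Fq) : Fin n → LaurentSeries Fq :=
  fun i => polyK Fq (f i) / polyK Fq g

/-- Points of the lattice `A · 𝔽_q[X]^m` in `K^m`. -/
def latticePts {Fq : Type} [Field Fq] {m : ℕ}
    (A : Matrix (Fin m) (Fin m) (LaurentSeries Fq)) :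
    Set (Fin m → LaurentSeries Fq) :=
  {w | ∃ p : Fin m → Polynomial Fq, w = A.mulVec fun i => polyK Fq (p i)}

/-- First minimum of the lattice `A · 𝔽_q[X]^m`. -/
def lambda1 {Fq : Type} [Field Fq] {m : ℕ}
    (A : Matrix (Fin m) (Fin m) (LaurentSeries Fq)) : ℝ :=
  sInf {r | ∃ w ∈ latticePts A, w ≠ 0 ∧ r = supNorm w}

/-- `i`-th successive minimum of the lattice `A · 𝔽_q[X]^m`. -/
def succMin {Fq : Type} [Field Fq] {m : ℕ}
    (A : Matrix (Fin m) (Fin m) (LaurentSeries Fq)) (i : ℕ) : ℝ :=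
  sInf {r | ∃ v : Fin i → (Fin m → LaurentSeries Fq),
    (∀ j, v j ∈ latticePts A) ∧ LinearIndependent (LaurentSeries Fq) v ∧
    ∀ j, supNorm (v j) ≤ r}

/-- `x` is `ψ`-approximable. -/
def IsPsiApprox {Fq : Type} [Field Fq] {n : ℕ} (ψ : ℝ → ℝ)
    (x : Fin n → LaurentSeries Fq) : Prop :=
  {fg : (Fin n → Polynomial Fq) × Polynomial Fq | fg.2 ≠ 0 ∧
    supNorm (fun i => x i - polyK Fq (fg.1 i) / polyK Fq fg.2) <
      ψ (kabs (polyK Fq fg.2))}.Infinite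

/-- The set `Exact(ψ)` in the ultrametric formulation. -/
def ExactSet (Fq : Type) [Field Fq] (n : ℕ) (ψ : ℝ → ℝ) :
    Set (Fin n → LaurentSeries Fq) :=
  {x | (∀ i, kabs (x i) ≤ 1) ∧
    {fg : (Fin n → Polynomial Fq) × Polynomial Fq | fg.2 ≠ 0 ∧
      supNorm (fun i => x i - polyK Fq (fg.1 i) / polyK Fq fg.2) =
        ψ (kabs (polyK Fq fg.2))}.Infinite ∧
    ∃ G : ℝ, ∀ (f : Fin n → Polynomial Fq) (g : Polynomial Fq), g ≠ 0 →
      G ≤ kabs (polyK Fq g) →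
      ψ (kabs (polyK Fq g)) ≤ supNorm fun i => x i - polyK Fq (f i) / polyK Fq g}

/-- The lower order of infinity `λ_ψ` of `ψ`. -/
def lambdaPsi (ψ : ℝ → ℝ) : ℝ≥0∞ :=
  Filter.liminf (fun s => ENNReal.ofReal (-Real.log (ψ s) / Real.log s)) Filter.atTop

lemma IsNonarchimedean.abv_det_lt_one {R ι : Type*} [CommRing R] [Nontrivial R] [Fintype ι]
    [DecidableEq ι] [Nonempty ι] {v : AbsoluteValue R ℝ} (hv : IsNonarchimedean v)
    {W : Matrix ι ι R} (hW : ∀ i j, v (W i j) < 1) : v W.det < 1 := by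
  -- the ultrametric inequality bounds `v W.det` by one term of the Leibniz expansion
  obtain ⟨σ, -, hσ⟩ := hv.finset_image_add_of_nonempty
    (fun σ : Equiv.Perm ι => Equiv.Perm.sign σ • ∏ i, W (σ i) i) Finset.univ_nonempty
  have hterm : v (Equiv.Perm.sign σ • ∏ i, W (σ i) i) = ∏ i, v (W (σ i) i) := by
    rw [← map_prod v]
    rcases Int.units_eq_one_or (Equiv.Perm.sign σ) with h | h <;> simp [h, Units.smul_def]
  let i₀ := Classical.arbitrary ι
  calc v W.det ≤ ∏ i, v (W (σ i) i) := by rw [Matrix.det_apply]; exact hσ.trans_eq hterm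
    _ = v (W (σ i₀) i₀) * ∏ i ∈ Finset.univ.erase i₀, v (W (σ i) i) :=
      (Finset.mul_prod_erase _ _ (Finset.mem_univ _)).symm
    _ ≤ v (W (σ i₀) i₀) := mul_le_of_le_one_right (v.nonneg _)
      (Finset.prod_le_one (fun _ _ => v.nonneg _) fun _ _ => (hW _ _).le)
    _ < 1 := hW _ _

section

open scoped Matrix

variable {Fq : Type} [Field Fq]

lemma kabs_one : kabs (1 : LaurentSeries Fq) = 1 := by
  simp [kabs]

lemma kabs_mul (x y : LaurentSeries Fq) : kabs (x * y) = kabs x * kabs y := by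
  by_cases hx : x = 0
  · simp [hx, kabs]
  by_cases hy : y = 0
  · simp [hy, kabs]
  simp only [kabs, if_neg (mul_ne_zero hx hy), if_neg hx, if_neg hy, HahnSeries.order_mul hx hy]
  push_cast
  rw [neg_add, Real.exp_add]

def kabsAbv : AbsoluteValue (LaurentSeries Fq) ℝ where
  toFun := kabs
  map_mul' := kabs_mul
  nonneg' := kabs_nonneg
  eq_zero' _ := kabs_eq_zero
  add_le' x y := (kabs_add_le x y).trans
    (max_le (le_add_of_nonneg_right (kabs_nonneg y)) (le_add_of_nonneg_left (kabs_nonneg x)))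

lemma isNonarchimedean_kabsAbv : IsNonarchimedean (kabsAbv : LaurentSeries Fq → ℝ) :=
  kabs_add_le

lemma kabs_le_supNorm {m : ℕ} (v : Fin m → LaurentSeries Fq) (i : Fin m) :
    kabs (v i) ≤ supNorm v :=
  le_ciSup (f := fun j => kabs (v j)) (Set.finite_range _).bddAbove i

lemma polyK_monomial (k : ℕ) (a : Fq) :
    polyK Fq (Polynomial.monomial k a) = HahnSeries.single (-(k : ℤ)) a := by
  simp [polyK, Polynomial.aeval_monomial, HahnSeries.single_pow, LaurentSeries.algebraMap_apply,
    HahnSeries.C_apply, HahnSeries.single_mul_single]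

lemma coeff_polyK_neg_natCast (g : Polynomial Fq) (k : ℕ) :
    (polyK Fq g).coeff (-(k : ℤ)) = g.coeff k := by
  induction g using Polynomial.induction_on' with
  | add p q hp hq => simp [hp, hq]
  | monomial j a =>
    rw [polyK_monomial, HahnSeries.coeff_single, Polynomial.coeff_monomial]
    simp [eq_comm]

lemma one_le_kabs_polyK {g : Polynomial Fq} (hg : g ≠ 0) : 1 ≤ kabs (polyK Fq g) := by
  have hlead : (polyK Fq g).coeff (-(g.natDegree : ℤ)) ≠ 0 := by
    simpa [coeff_polyK_neg_natCast] using hg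
  have hne : polyK Fq g ≠ 0 := fun h => hlead (by simp [h])
  have hord : ((polyK Fq g).order : ℝ) ≤ 0 := by
    have := HahnSeries.order_le_of_coeff_ne_zero hlead
    exact_mod_cast this.trans (by omega)
  rw [kabs, if_neg hne, Real.one_le_exp_iff]
  linarith

lemma det_gMat (n : ℕ) (t : ℤ) : (gMat Fq n t).det = 1 := by
  have hX : Xe Fq ≠ 0 := HahnSeries.single_ne_zero one_ne_zero
  simp only [gMat, Matrix.det_diagonal, Fin.prod_univ_succ, if_pos, Fin.succ_ne_zero,
    if_false, Finset.prod_const, Finset.card_univ, Fintype.card_fin, ← zpow_natCast, ← zpow_mul,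
    ← zpow_add₀ hX]
  ring_nf
  exact zpow_zero _

lemma det_uMat {n : ℕ} (x : Fin n → LaurentSeries Fq) : (uMat x).det = 1 := by
  have hlower : (uMat x).IsLowerTriangular := by
    intro i j (hij : i < j)
    simp [uMat, hij.ne, Fin.ne_zero_of_lt hij]
  rw [Matrix.det_of_isLowerTriangular _ hlower]
  exact Finset.prod_eq_one fun i _ => by simp [uMat]

lemma exists_one_le_supNorm_mulVec {m : ℕ}
    {A : Matrix (Fin (m + 1)) (Fin (m + 1)) (LaurentSeries Fq)} (hA : kabs A.det = 1) {p : Fin (m + 1) → Fin (m + 1) → Polynomial Fq}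
    (hp : LinearIndependent (LaurentSeries Fq) fun j i => polyK Fq (p j i)) :
    ∃ j, 1 ≤ supNorm (A *ᵥ fun i => polyK Fq (p j i)) := by
  set Q : Matrix (Fin (m + 1)) (Fin (m + 1)) (Polynomial Fq) := Matrix.of fun i j => p j i
  set P := (polyK Fq).mapMatrix Q
  have hP : P.det ≠ 0 :=
    ((Matrix.isUnit_iff_isUnit_det P).mp (Matrix.linearIndependent_cols_iff_isUnit.mp hp)).ne_zero
  have hQ : Q.det ≠ 0 := fun h => hP (by rw [← RingHom.map_det, h, map_zero])
  have hAP : 1 ≤ kabs (A * P).det := by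
    rw [Matrix.det_mul, kabs_mul, hA, one_mul, ← RingHom.map_det]
    exact one_le_kabs_polyK hQ
  by_contra! hshort
  refine hAP.not_gt (isNonarchimedean_kabsAbv.abv_det_lt_one fun i j => ?_)
  exact (kabs_le_supNorm (A *ᵥ fun i => polyK Fq (p j i)) i).trans_lt (hshort j)

theorem exists_linearForm_eq_zero_of_supNorm_mulVec_lt_one {m : ℕ}
    {A : Matrix (Fin (m + 1)) (Fin (m + 1)) (LaurentSeries Fq)} (hA : kabs A.det = 1) :
    ∃ φ : (Fin (m + 1) → LaurentSeries Fq) →ₗ[LaurentSeries Fq] LaurentSeries Fq, φ ≠ 0 ∧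
      ∀ p : Fin (m + 1) → Polynomial Fq,
        supNorm (A *ᵥ fun i => polyK Fq (p i)) < 1 → φ (fun i => polyK Fq (p i)) = 0 := by
  set S : Set (Fin (m + 1) → LaurentSeries Fq) :=
    {v | (∃ p : Fin (m + 1) → Polynomial Fq, v = fun i => polyK Fq (p i)) ∧ supNorm (A *ᵥ v) < 1}
  have hS : Submodule.span (LaurentSeries Fq) S ≠ ⊤ := by
    intro hspan
    obtain ⟨b, hbS, hbspan, hbli⟩ := exists_linearIndependent (LaurentSeries Fq) S
    let e : Fin (m + 1) ≃ b :=
      ((Module.Basis.mk hbli (by simp [hbspan, hspan])).indexEquiv (Pi.basisFun _ _)).symm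
    choose p hp using fun j => (hbS (e j).2).1
    have hli : LinearIndependent (LaurentSeries Fq) fun j i => polyK Fq (p j i) := by
      rw [show (fun j i => polyK Fq (p j i)) = Subtype.val ∘ e from funext fun j => (hp j).symm]
      exact hbli.comp e e.injective
    obtain ⟨j, hj⟩ := exists_one_le_supNorm_mulVec hA hli
    exact hj.not_gt (hp j ▸ (hbS (e j).2).2)
  obtain ⟨φ, hφ, hker⟩ := Submodule.exists_dual_map_eq_bot_of_lt_top hS.lt_top inferInstance
  refine ⟨φ, hφ, fun p hp => ?_⟩
  have hmem : φ (fun i => polyK Fq (p i)) ∈ (Submodule.span (LaurentSeries Fq) S).map φ :=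
    Submodule.mem_map_of_mem (Submodule.subset_span ⟨⟨p, rfl⟩, hp⟩)
  simpa [hker] using hmem

end

theorem simplex_lemma_general (Fq : Type) [Field Fq] (n : ℕ)
    (t : ℤ) (M Mk : ℝ) (hMk : (2 * (n : ℝ) - 1) * M < Mk)
    (x0 : Fin n → LaurentSeries Fq) :
    ∃ φ : (Fin (n+1) → LaurentSeries Fq) →ₗ[LaurentSeries Fq] LaurentSeries Fq,
      φ ≠ 0 ∧
      ∀ p : Fin (n+1) → Polynomial Fq,
        supNorm ((gMat Fq n t * uMat x0).mulVec fun i => polyK Fq (p i)) <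
          Real.exp (-Mk + (2 * (n : ℝ) - 1) * M) →
        φ (fun i => polyK Fq (p i)) = 0 := by
  have hdet : kabs (gMat Fq n t * uMat x0).det = 1 := by
    rw [Matrix.det_mul, det_gMat, det_uMat, mul_one, kabs_one]
  obtain ⟨φ, hφ, hvanish⟩ := exists_linearForm_eq_zero_of_supNorm_mulVec_lt_one hdet
  refine ⟨φ, hφ, fun p hp => hvanish p (hp.trans ?_)⟩
  rw [Real.exp_lt_one_iff]
  linarith

/-- Simplex lemma in the function-field setting. -/
theorem simplex_lemma (Fq : Type) [Field Fq] [Fintype Fq] (n : ℕ) (hn : 0 < n)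
    (t : ℤ) (M Mk : ℝ) (hM : 0 < M) (hMk : (2 * (n : ℝ) - 1) * M < Mk)
    (x0 : Fin n → LaurentSeries Fq) (hx0 : ∀ i, kabs (x0 i) ≤ 1) :
    ∃ φ : (Fin (n+1) → LaurentSeries Fq) →ₗ[LaurentSeries Fq] LaurentSeries Fq,
      φ ≠ 0 ∧
      ∀ p : Fin (n+1) → Polynomial Fq,
        supNorm ((gMat Fq n t * uMat x0).mulVec fun i => polyK Fq (p i)) <
          Real.exp (-Mk + (2 * (n : ℝ) - 1) * M) →
        φ (fun i => polyK Fq (p i)) = 0 :=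
  simplex_lemma_general Fq n t M Mk hMk x0
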